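/- arXiv:1912.04436 — 2 statements merged into one kernel-verified Lean document; each statement's English description precedes it below -/
import Mathlib

section
/- Let (Q_n)_{n≥0} be a sequence of nonnegative reals with Q_0 = 1 satisfying Q_n = ∑_{k≥3} w_k ∑_{n_1+⋯+n_{2k-2} = n-1, n_i ≥ 0} Q_{n_1}⋯Q_{n_{2k-2}} for n ≥ 1, where w_k ≥ 0. If ρ = inf_{x>0} φ(x)/x where φ(x) = ∑_{k≥3} w_k (1+x)^{2k-2} (assumed finite on some interval), and ρ is attained at some x₀ > 0 where the series converges, then Q_n ≤ ρ^n for all n ≥ 0. -/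
/-!
Let `φ(x) = ∑ w_k (1 + x)^(2k-2)` and `F(y) = ∑_{n ≥ 1} Q_n yⁿ`. The recurrence says that
`F ≤ y φ(F)` coefficientwise, since `(1 + F)^m` is the generating function of the `m`-fold
compositions. At `y = 1/ρ` we have `y φ(x₀) = x₀`, so by induction every partial sum of `F(y)`
stays below `x₀`: if `F_N ≤ x₀` then `F_{N+1} ≤ y φ(F_N) ≤ y φ(x₀) = x₀`. Hence `Q_n ≤ x₀ ρⁿ`.
Finally the minimality of `φ(x)/x` at `x₀` forces `x₀ ≤ 1`, because each `(1 + x)^m / x` with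
`m ≥ 2` is increasing on `[1, ∞)`.
-/

open Finset
open scoped ENNReal

theorem sum_range_sum_antidiagonalTuple_prod_le_pow {R : Type*} [CommSemiring R] [PartialOrder R]
    [IsOrderedRing R] {a : ℕ → R} (ha : ∀ i, 0 ≤ a i) (m N : ℕ) :
    ∑ n ∈ range (N + 1), ∑ t ∈ Nat.antidiagonalTuple m n, ∏ i, a (t i)
      ≤ (∑ i ∈ range (N + 1), a i) ^ m := by
  have hdisj : (range (N + 1) : Set ℕ).PairwiseDisjoint (Nat.antidiagonalTuple m) := by
    intro s _ s' _ hne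
    refine disjoint_left.2 fun t ht ht' => hne ?_
    rw [Nat.mem_antidiagonalTuple] at ht ht'
    rw [← ht, ← ht']
  rw [← Fin.prod_const, prod_univ_sum, ← sum_biUnion hdisj]
  refine sum_le_sum_of_subset_of_nonneg ?_ fun t _ _ => prod_nonneg fun i _ => ha (t i)
  intro t ht
  obtain ⟨n, hn, ht⟩ := mem_biUnion.1 ht
  rw [Nat.mem_antidiagonalTuple] at ht
  refine Fintype.mem_piFinset.2 fun i => mem_range.2 ?_
  have := single_le_sum (fun j _ => Nat.zero_le (t j)) (mem_univ i)
  rw [mem_range] at hn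
  omega

theorem sum_antidiagonalTuple_prod_mul_pow {R : Type*} [CommSemiring R] (a : ℕ → R) (y : R)
    (m n : ℕ) :
    (∑ t ∈ Nat.antidiagonalTuple m n, ∏ i, a (t i)) * y ^ n
      = ∑ t ∈ Nat.antidiagonalTuple m n, ∏ i, a (t i) * y ^ t i := by
  rw [sum_mul]
  refine sum_congr rfl fun t ht => ?_
  rw [prod_mul_distrib, prod_pow_eq_pow_sum, (Nat.mem_antidiagonalTuple.1 ht)]

theorem sum_range_mul_pow_le_of_le_tsum_antidiagonalTuple {ι : Type*} (c : ι → ℝ≥0∞)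
    (m : ι → ℕ) {a : ℕ → ℝ≥0∞} (ha0 : a 0 = 1)
    (hrec : ∀ n, a (n + 1) ≤ ∑' k, c k * ∑ t ∈ Nat.antidiagonalTuple (m k) n, ∏ i, a (t i))
    {x y : ℝ≥0∞} (hxy : y * ∑' k, c k * (1 + x) ^ m k ≤ x) (N : ℕ) :
    ∑ n ∈ range N, a (n + 1) * y ^ (n + 1) ≤ x := by
  induction N with
  | zero => simp
  | succ N ih =>
    have hpartial : ∑ n ∈ range (N + 1), a n * y ^ n ≤ 1 + x := by
      rw [sum_range_succ', ha0, pow_zero, one_mul, add_comm]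
      gcongr
    have hterm (n : ℕ) : a (n + 1) * y ^ (n + 1) ≤
        y * ∑' k, c k * ∑ t ∈ Nat.antidiagonalTuple (m k) n, ∏ i, a (t i) * y ^ t i := by
      calc a (n + 1) * y ^ (n + 1)
          ≤ y * ((∑' k, c k * ∑ t ∈ Nat.antidiagonalTuple (m k) n, ∏ i, a (t i)) * y ^ n) := by
            rw [mul_left_comm, ← pow_succ']
            gcongr
            exact hrec n
        _ = _ := by
            rw [← ENNReal.tsum_mul_right]
            simp only [mul_assoc, sum_antidiagonalTuple_prod_mul_pow]
    calc ∑ n ∈ range (N + 1), a (n + 1) * y ^ (n + 1)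
        ≤ ∑ n ∈ range (N + 1),
            y * ∑' k, c k * ∑ t ∈ Nat.antidiagonalTuple (m k) n, ∏ i, a (t i) * y ^ t i :=
          sum_le_sum fun n _ => hterm n
      _ = y * ∑' k, c k * ∑ n ∈ range (N + 1),
            ∑ t ∈ Nat.antidiagonalTuple (m k) n, ∏ i, a (t i) * y ^ t i := by
          rw [← mul_sum, ← Summable.tsum_finsetSum fun _ _ => ENNReal.summable]
          simp only [mul_sum]
      _ ≤ y * ∑' k, c k * (∑ n ∈ range (N + 1), a n * y ^ n) ^ m k := by
          gcongr with k
          exact sum_range_sum_antidiagonalTuple_prod_le_pow (a := fun i => a i * y ^ i)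
            (fun _ => zero_le) _ N
      _ ≤ y * ∑' k, c k * (1 + x) ^ m k := by gcongr
      _ ≤ x := hxy

theorem mul_pow_le_of_le_tsum_antidiagonalTuple {ι : Type*} (c : ι → ℝ≥0∞)
    (m : ι → ℕ) {a : ℕ → ℝ≥0∞} (ha0 : a 0 = 1)
    (hrec : ∀ n, a (n + 1) ≤ ∑' k, c k * ∑ t ∈ Nat.antidiagonalTuple (m k) n, ∏ i, a (t i))
    {x y : ℝ≥0∞} (hxy : y * ∑' k, c k * (1 + x) ^ m k ≤ x) (n : ℕ) :
    a (n + 1) * y ^ (n + 1) ≤ x :=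
  (single_le_sum (fun _ _ => zero_le) (self_mem_range_succ n)).trans
    (sum_range_mul_pow_le_of_le_tsum_antidiagonalTuple c m ha0 hrec hxy (n + 1))

theorem ENNReal.ofReal_tsum_le_of_nonneg {α : Type*} {f : α → ℝ} (hf : ∀ a, 0 ≤ f a) :
    ENNReal.ofReal (∑' a, f a) ≤ ∑' a, ENNReal.ofReal (f a) := by
  by_cases hsum : Summable f
  · exact (ENNReal.ofReal_tsum_of_nonneg hf hsum).le
  · simp [tsum_eq_zero_of_not_summable hsum]

theorem le_one_of_tsum_div_le {ι : Type*} {w : ι → ℝ} {m : ι → ℕ} (hw : ∀ k, 0 ≤ w k)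
    (hm : ∀ k, 2 ≤ m k) {x S : ℝ} (hS : HasSum (fun k => w k * (1 + x) ^ m k) S)
    (hpos : 0 < S / x) (hmin : ∀ S₁, HasSum (fun k => w k * 2 ^ m k) S₁ → S / x ≤ S₁) :
    x ≤ 1 := by
  by_contra! hx
  have hx₀ : 0 < x := by linarith
  have hpow (k : ι) : (2 : ℝ) ^ m k ≤ (1 + x) ^ m k := by gcongr; linarith
  have hterm (k : ι) : (1 + x) ^ 2 * (w k * 2 ^ m k) ≤ 4 * (w k * (1 + x) ^ m k) := by
    obtain ⟨j, hj⟩ := Nat.exists_eq_add_of_le (hm k)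
    have hwk := hw k
    calc (1 + x) ^ 2 * (w k * 2 ^ m k) = 4 * (w k * ((1 + x) ^ 2 * 2 ^ j)) := by rw [hj]; ring
      _ ≤ 4 * (w k * ((1 + x) ^ 2 * (1 + x) ^ j)) := by gcongr; linarith
      _ = 4 * (w k * (1 + x) ^ m k) := by rw [hj]; ring
  obtain ⟨S₁, hS₁⟩ : Summable (fun k => w k * 2 ^ m k) :=
    hS.summable.of_nonneg_of_le (fun k => mul_nonneg (hw k) (by positivity))
      fun k => mul_le_mul_of_nonneg_left (hpow k) (hw k)
  have hsum : (1 + x) ^ 2 * S₁ ≤ 4 * S := hasSum_le hterm (hS₁.mul_left _) (hS.mul_left _)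
  have hmin₁ : S ≤ x * S₁ := by
    have := hmin S₁ hS₁
    rwa [div_le_iff₀ hx₀, mul_comm] at this
  have hS₀ : 0 < S := by simpa [div_pos_iff_of_pos_right hx₀] using hpos
  have hS₁ : 0 < S₁ := pos_of_mul_pos_right (hS₀.trans_le hmin₁) hx₀.le
  nlinarith [mul_pos (pow_pos (sub_pos.2 hx) 2) hS₁]

theorem le_mul_pow_succ_of_eq_tsum_antidiagonalTuple {ι : Type*} {w : ι → ℝ} {m : ι → ℕ}
    (hw : ∀ k, 0 ≤ w k) {Q : ℕ → ℝ} (hQ : ∀ n, 0 ≤ Q n) (hQ0 : Q 0 = 1)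
    (hrec : ∀ n, Q (n + 1) = ∑' k, w k * ∑ t ∈ Nat.antidiagonalTuple (m k) n, ∏ i, Q (t i))
    {x S : ℝ} (hx : 0 < x) (hS : HasSum (fun k => w k * (1 + x) ^ m k) S) (n : ℕ) :
    Q (n + 1) ≤ x * (S / x) ^ (n + 1) := by
  have hρ : 0 ≤ S / x := div_nonneg (hS.nonneg fun k => mul_nonneg (hw k) (by positivity)) hx.le
  have hrecE (n : ℕ) : ENNReal.ofReal (Q (n + 1)) ≤ ∑' k, ENNReal.ofReal (w k) *
      ∑ t ∈ Nat.antidiagonalTuple (m k) n, ∏ i, ENNReal.ofReal (Q (t i)) := by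
    rw [hrec]
    refine (ENNReal.ofReal_tsum_le_of_nonneg fun k => ?_).trans_eq (tsum_congr fun k => ?_)
    · exact mul_nonneg (hw k) (sum_nonneg fun t _ => prod_nonneg fun i _ => hQ _)
    · rw [ENNReal.ofReal_mul (hw k), ENNReal.ofReal_sum_of_nonneg
        fun t _ => prod_nonneg fun i _ => hQ _]
      simp only [ENNReal.ofReal_prod_of_nonneg fun i _ => hQ _]
  have hφ : ∑' k, ENNReal.ofReal (w k) * (1 + ENNReal.ofReal x) ^ m k
      = ENNReal.ofReal (S / x) * ENNReal.ofReal x := by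
    rw [← ENNReal.ofReal_mul hρ, div_mul_cancel₀ S hx.ne', ← hS.tsum_eq,
      ENNReal.ofReal_tsum_of_nonneg (fun k => mul_nonneg (hw k) (by positivity)) hS.summable]
    refine tsum_congr fun k => ?_
    rw [ENNReal.ofReal_mul (hw k), ENNReal.ofReal_pow (by positivity),
      ENNReal.ofReal_add zero_le_one hx.le, ENNReal.ofReal_one]
  have key := mul_pow_le_of_le_tsum_antidiagonalTuple (fun k => ENNReal.ofReal (w k)) m
    (a := fun n => ENNReal.ofReal (Q n)) (by simp [hQ0]) hrecE (x := ENNReal.ofReal x)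
    -- `ρ = 0` gives `y = ∞`, which the inequality then turns into `Q (n + 1) = 0`
    (y := (ENNReal.ofReal (S / x))⁻¹)
    (by rw [hφ, ← mul_assoc]; exact mul_le_of_le_one_left' (ENNReal.inv_mul_le_one _)) n
  rw [← ENNReal.le_div_iff_mul_le (Or.inr (by simpa using hx)) (Or.inr ENNReal.ofReal_ne_top),
    ENNReal.div_eq_inv_mul, ENNReal.inv_pow, inv_inv, ← ENNReal.ofReal_pow hρ,
    ← ENNReal.ofReal_mul (pow_nonneg hρ _)] at key
  rw [mul_comm x]
  exact (ENNReal.ofReal_le_ofReal_iff (by positivity)).1 key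

/-- If `Q` satisfies the tree recurrence with nonnegative weights `w_k` (`k ≥ 3`), and
`ρ = φ(x₀)/x₀` where `x₀ > 0` realizes the infimum of `φ(x)/x` and the series defining
`φ(x₀)` converges, then `Q n ≤ ρ^n` for all `n`. -/
theorem stmt_5 (w : ℕ → ℝ) (hw : ∀ k, 3 ≤ k → 0 ≤ w k)
    (Q : ℕ → ℝ) (hQnonneg : ∀ n, 0 ≤ Q n) (hQ0 : Q 0 = 1)
    (hrec : ∀ n : ℕ, 1 ≤ n →
      Q n = ∑' k : ℕ, w (k + 3) *
        ∑ t ∈ Finset.Nat.antidiagonalTuple (2 * (k + 3) - 2) (n - 1), ∏ i, Q (t i))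
    (x₀ : ℝ) (hx₀ : 0 < x₀) (S : ℝ)
    (hS : HasSum (fun k : ℕ => w (k + 3) * (1 + x₀) ^ (2 * (k + 3) - 2)) S)
    (ρ : ℝ) (hρ : ρ = S / x₀)
    (hinf : ∀ x : ℝ, 0 < x → ∀ Sx : ℝ,
      HasSum (fun k : ℕ => w (k + 3) * (1 + x) ^ (2 * (k + 3) - 2)) Sx → ρ ≤ Sx / x) :
    ∀ n : ℕ, Q n ≤ ρ ^ n := by
  have hw₃ (k : ℕ) : 0 ≤ w (k + 3) := hw _ (by omega)
  rintro (_ | n)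
  · simp [hQ0]
  have hQ : Q (n + 1) ≤ x₀ * ρ ^ (n + 1) := hρ ▸
    le_mul_pow_succ_of_eq_tsum_antidiagonalTuple hw₃ hQnonneg hQ0
      (fun n => by simpa using hrec (n + 1) n.succ_pos) hx₀ hS n
  have hρ₀ : 0 ≤ ρ :=
    hρ ▸ div_nonneg (hS.nonneg fun k => mul_nonneg (hw₃ k) (by positivity)) hx₀.le
  rcases hρ₀.eq_or_lt with hρ₀ | hρ₀
  · simpa [← hρ₀] using hQ
  have hx₁ : x₀ ≤ 1 := by
    refine le_one_of_tsum_div_le hw₃ (fun k => by omega) hS (hρ ▸ hρ₀) fun S₁ h₁ => ?_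
    rw [← hρ, ← div_one S₁]
    exact hinf 1 one_pos S₁ (by rwa [one_add_one_eq_two])
  calc Q (n + 1) ≤ x₀ * ρ ^ (n + 1) := hQ
    _ ≤ ρ ^ (n + 1) := mul_le_of_le_one_left (by positivity) hx₁
end

section
/- Let γ > 0, Δ ≥ 2, and for integers k ≥ 3 and n ≥ 1 with k_1,…,k_n ≥ 3, it holds that (1/(⌈γ(Δ-1)⌉+1))^n · ∏_{s=1}^n (1 - (1 - 1/(⌈γ(Δ-1)⌉+1))^{Δ-1})^{2k_s - 3} ≤ (1/(Δ-1))^n · ∏_{s=1}^n (1/γ)(1 - e^{-1/γ})^{2k_s - 3}. -/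
/-!
Put `D = Δ - 1` and `c = ⌈γD⌉ + 1 > γD`. Since `e^{1/x} > 1 + 1/x`, we have
`e^{-1/(γD)} < 1 - 1/(γD + 1) ≤ 1 - 1/c`, and raising to the power `D` gives
`e^{-1/γ} ≤ (1 - 1/c)^D`. Hence every factor `1 - (1 - 1/c)^D` on the left is at most
`1 - e^{-1/γ}`, while `1/c ≤ 1/(γD)` takes care of the prefactors.
-/

open Real

lemma Real.exp_neg_inv_lt_one_sub_inv_add_one {x : ℝ} (hx : 0 < x) :
    exp (-1 / x) < 1 - 1 / (x + 1) := by
  have h : 1 / x + 1 < exp (1 / x) := add_one_lt_exp (by positivity)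
  calc exp (-1 / x) = (exp (1 / x))⁻¹ := by rw [← exp_neg, neg_div]
    _ < (1 / x + 1)⁻¹ := inv_strictAnti₀ (by positivity) h
    _ = 1 - 1 / (x + 1) := by field_simp; ring

lemma Real.exp_neg_inv_le_one_sub_inv_pow {x c : ℝ} {m : ℕ} (hx : 0 < x) (hm : 0 < m)
    (hc : x * m + 1 ≤ c) : exp (-1 / x) ≤ (1 - 1 / c) ^ m := by
  have hxm : 0 < x * m := by positivity
  calc exp (-1 / x) = exp (-1 / (x * m)) ^ m := by
        rw [← exp_nat_mul]; congr 1; field_simp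
    _ ≤ (1 - 1 / (x * m + 1)) ^ m := by
        gcongr; exact (exp_neg_inv_lt_one_sub_inv_add_one hxm).le
    _ ≤ (1 - 1 / c) ^ m := by
        gcongr
        rw [sub_nonneg, div_le_one (by positivity)]; linarith

theorem stmt_12_general (γ : ℝ) (hγ : 0 < γ) (Δ : ℕ) (hΔ : 2 ≤ Δ)
    (n : ℕ) (k : Fin n → ℕ) :
    (1 / ((⌈γ * ((Δ : ℝ) - 1)⌉ : ℝ) + 1)) ^ n *
        ∏ s, (1 - (1 - 1 / ((⌈γ * ((Δ : ℝ) - 1)⌉ : ℝ) + 1)) ^ (Δ - 1)) ^ (2 * k s - 3)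
      ≤ (1 / ((Δ : ℝ) - 1)) ^ n *
        ∏ s, (1 / γ) * (1 - Real.exp (-1 / γ)) ^ (2 * k s - 3) := by
  have hD : ((Δ - 1 : ℕ) : ℝ) = (Δ : ℝ) - 1 := by
    rw [Nat.cast_sub (by omega), Nat.cast_one]
  rw [← hD]
  set D := Δ - 1
  have hDpos : (0 : ℝ) < D := Nat.cast_pos.2 (by omega)
  set c : ℝ := (⌈γ * D⌉ : ℝ) + 1
  have hc : γ * D + 1 ≤ c := by simp only [c]; linarith [Int.le_ceil (γ * D)]
  have hexp : exp (-1 / γ) ≤ (1 - 1 / c) ^ D :=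
    exp_neg_inv_le_one_sub_inv_pow hγ (by omega) hc
  have hcpos : 0 < c := by linarith [mul_pos hγ hDpos]
  have hfactor : 0 ≤ 1 - (1 - 1 / c) ^ D := by
    have : 1 / c ≤ 1 := by rw [div_le_one hcpos]; linarith [mul_pos hγ hDpos]
    linarith [pow_le_one₀ (n := D) (sub_nonneg.2 this) (by linarith [one_div_pos.2 hcpos])]
  have hprefactor : 1 / c ≤ 1 / D * (1 / γ) := by
    rw [one_div_mul_one_div, mul_comm]; gcongr; linarith
  rw [← Finset.pow_card_mul_prod, Finset.card_univ, Fintype.card_fin, ← mul_assoc, ← mul_pow]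
  gcongr

/-- The bound of Lemma 5 is dominated by the simplified bound of Remark 6:
`(1/(⌈γ(Δ-1)⌉+1))^n ∏ (1-(1-1/(⌈γ(Δ-1)⌉+1))^{Δ-1})^{2k_s-3}
  ≤ (1/(Δ-1))^n ∏ (1/γ)(1-e^{-1/γ})^{2k_s-3}`. -/
theorem stmt_12 (γ : ℝ) (hγ : 0 < γ) (Δ : ℕ) (hΔ : 2 ≤ Δ)
    (n : ℕ) (hn : 1 ≤ n) (k : Fin n → ℕ) (hk : ∀ s, 3 ≤ k s) :
    (1 / ((⌈γ * ((Δ : ℝ) - 1)⌉ : ℝ) + 1)) ^ n *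
        ∏ s, (1 - (1 - 1 / ((⌈γ * ((Δ : ℝ) - 1)⌉ : ℝ) + 1)) ^ (Δ - 1)) ^ (2 * k s - 3)
      ≤ (1 / ((Δ : ℝ) - 1)) ^ n *
        ∏ s, (1 / γ) * (1 - Real.exp (-1 / γ)) ^ (2 * k s - 3) :=
  stmt_12_general γ hγ Δ hΔ n k
end
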